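/- arXiv:1003.4274 — 3 statements merged into one kernel-verified Lean document; each statement's English description precedes it below -/
import Mathlib

section
/- For any finite symmetric two-player game (X, π) with relative payoff game (X, Δ), imitation is subject to a money pump if and only if there exists an imitation cycle in (X, Δ). -/
/-- The imitator's action sequence: `y₀` initially; imitate the opponent's previous
action iff it earned a strictly positive relative payoff. -/
noncomputable def imitSeq {X : Type*} (Δ : X → X → ℝ) (x : ℕ → X) (y0 : X) : ℕ → X
  | 0 => y0
  | t + 1 => if 0 < Δ (x t) (imitSeq Δ x y0 t) then x t else imitSeq Δ x y0 t

/-- Imitation is subject to a money pump. -/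
def MoneyPump {X : Type*} (Δ : X → X → ℝ) : Prop :=
  ∀ M : ℝ, ∃ (y0 : X) (x : ℕ → X) (T : ℕ),
    M < ∑ t ∈ Finset.range (T + 1), Δ (x t) (imitSeq Δ x y0 t)

/-- An imitation cycle: a non-constant finite cyclic path of profiles along which the
first player always gets strictly positive relative payoff and the second player
imitates the first player's previous action. -/
def ImitationCycle {X : Type*} (Δ : X → X → ℝ) : Prop :=
  ∃ (n : ℕ) (x y : ℕ → X), 1 ≤ n ∧ (x n, y n) = (x 0, y 0) ∧
    (∃ t < n, (x t, y t) ≠ (x (t + 1), y (t + 1))) ∧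
    ∀ t < n, 0 < Δ (x t) (y t) ∧ y (t + 1) = x t

/-!
If `(x₀, y₀), …, (xₙ, yₙ)` is an imitation cycle, the opponent who plays `x₀, …, xₙ₋₁`
periodically against the imitator starting at `y₀` keeps the imitator on the cycle and gains
the positive cycle sum in every period, so the accumulated relative payoff is unbounded.

Conversely, look at the gain times, at which the opponent's relative payoff is positive.
Between two consecutive gain times the imitator does not move, so the profiles at gain times
form a walk along which the imitator always holds the opponent's previous action. A repeated
profile on this walk closes an imitation cycle (non-constant since `Δ a a = 0`). Without cycles
there are therefore at most `|X|²` gain times up to any horizon, and the accumulated relative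
payoff is at most `|X|² · max Δ`.
-/

open Finset

theorem Function.Periodic.sum_range_mul {M : Type*} [AddCommMonoid M] {f : ℕ → M} {n : ℕ}
    (hf : Function.Periodic f n) (k : ℕ) :
    ∑ t ∈ range (k * n), f t = k • ∑ t ∈ range n, f t := by
  induction k with
  | zero => simp
  | succ k ih =>
    rw [Nat.succ_mul, sum_range_add, ih, succ_nsmul]
    congr 1
    refine sum_congr rfl fun j _ => ?_
    rw [add_comm]
    exact_mod_cast hf.nat_mul k j

theorem Nat.lt_card_of_lt_count {p : ℕ → Prop} [DecidablePred p] {k n : ℕ}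
    (h : k < Nat.count p n) (hf : (Set.ofPred p).Finite) : k < #hf.toFinset :=
  h.trans_le (Nat.count_le_card hf n)

section Imitation

variable {X : Type*} {Δ : X → X → ℝ}

theorem imitSeq_succ_of_pos {x : ℕ → X} {y0 : X} {t : ℕ}
    (h : 0 < Δ (x t) (imitSeq Δ x y0 t)) : imitSeq Δ x y0 (t + 1) = x t :=
  if_pos h

theorem imitSeq_eq_of_forall_not_pos {x : ℕ → X} {y0 : X} {a b : ℕ} (hab : a ≤ b)
    (h : ∀ t ∈ Ico a b, ¬ 0 < Δ (x t) (imitSeq Δ x y0 t)) :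
    imitSeq Δ x y0 b = imitSeq Δ x y0 a := by
  induction b, hab using Nat.le_induction with
  | base => rfl
  | succ b hab ih =>
    rw [imitSeq, if_neg (h b (mem_Ico.2 ⟨hab, b.lt_succ_self⟩)),
      ih fun t ht => h t (Ico_subset_Ico_right b.le_succ ht)]

theorem imitSeq_eq_of_forall {x y : ℕ → X} {y0 : X} (h0 : y 0 = y0)
    (h : ∀ t, 0 < Δ (x t) (y t) ∧ y (t + 1) = x t) : imitSeq Δ x y0 = y := by
  funext t
  induction t with
  | zero => exact h0.symm
  | succ t ih => rw [imitSeq_succ_of_pos (ih ▸ (h t).1), (h t).2]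

theorem step_mod_of_closed {cx cy : ℕ → X} {n : ℕ} (hn : 0 < n) (hcy : cy n = cy 0)
    (hstep : ∀ t < n, cy (t + 1) = cx t) (t : ℕ) : cy ((t + 1) % n) = cx (t % n) := by
  have hstep' := hstep _ (Nat.mod_lt t hn)
  have ht : t + 1 = n * (t / n) + (t % n + 1) := by rw [← add_assoc, Nat.div_add_mod]
  rcases (show t % n + 1 ≤ n from Nat.mod_lt t hn).lt_or_eq with hlt | heq
  · rw [ht, Nat.mul_add_mod, Nat.mod_eq_of_lt hlt, hstep']
  · rw [heq] at ht hstep'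
    rw [ht, Nat.mul_add_mod_self_left, Nat.mod_self, ← hcy, hstep']

theorem ImitationCycle.moneyPump (h : ImitationCycle Δ) : MoneyPump Δ := by
  obtain ⟨n, cx, cy, hn, hcyc, -, hcycle⟩ := h
  set x := fun t => cx (t % n)
  have himit : imitSeq Δ x (cy 0) = fun t => cy (t % n) :=
    imitSeq_eq_of_forall (by simp) fun t => ⟨(hcycle _ (Nat.mod_lt t hn)).1,
      step_mod_of_closed hn (Prod.mk.inj hcyc).2 (fun t ht => (hcycle t ht).2) t⟩
  set s := ∑ t ∈ range n, Δ (cx t) (cy t)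
  have hs : 0 < s :=
    sum_pos (fun t ht => (hcycle t (mem_range.1 ht)).1) (nonempty_range_iff.2 (by omega))
  have hsum : ∀ k, ∑ t ∈ range (k * n), Δ (x t) (imitSeq Δ x (cy 0) t) = k • s := by
    intro k
    have hper : Function.Periodic (fun t => Δ (cx (t % n)) (cy (t % n))) n := fun t => by
      simp only [Nat.add_mod_right]
    rw [himit, hper.sum_range_mul]
    exact congrArg (k • ·) (sum_congr rfl fun t ht => by rw [Nat.mod_eq_of_lt (mem_range.1 ht)])
  intro M
  obtain ⟨k, hk⟩ := exists_lt_nsmul hs M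
  refine ⟨cy 0, x, (k + 1) * n - 1, ?_⟩
  rw [Nat.sub_add_cancel (Nat.one_le_iff_ne_zero.2 (by positivity)), hsum]
  exact hk.trans_le (nsmul_le_nsmul_left hs.le k.le_succ)

-- No gain time lies strictly between the `k`-th and the `(k+1)`-st, so the action adopted
-- after the `k`-th is still held at the `(k+1)`-st.
theorem imitSeq_nth_gain_succ {x : ℕ → X} {y0 : X} {N k : ℕ}
    (hk : k + 1 < Nat.count (fun t => 0 < Δ (x t) (imitSeq Δ x y0 t)) N) :
    imitSeq Δ x y0 (Nat.nth (fun t => 0 < Δ (x t) (imitSeq Δ x y0 t)) (k + 1)) =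
      x (Nat.nth (fun t => 0 < Δ (x t) (imitSeq Δ x y0 t)) k) := by
  have hlt := Nat.nth_lt_nth' k.lt_succ_self (Nat.lt_card_of_lt_count hk)
  rw [imitSeq_eq_of_forall_not_pos hlt fun t ht hgain =>
      (Nat.le_nth_of_lt_nth_succ (mem_Ico.1 ht).2 hgain).not_gt (mem_Ico.1 ht).1,
    imitSeq_succ_of_pos (Nat.nth_mem k (Nat.lt_card_of_lt_count (Nat.lt_of_succ_lt hk)))]

theorem imitationCycle_of_repeat (hΔ : ∀ a, Δ a a = 0) {u v : ℕ → X} {i j : ℕ} (hij : i < j)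
    (hpos : ∀ k < j, 0 < Δ (u k) (v k)) (hstep : ∀ k < j, v (k + 1) = u k)
    (hrep : (u i, v i) = (u j, v j)) : ImitationCycle Δ := by
  refine ⟨j - i, fun k => u (i + k), fun k => v (i + k), by omega, ?_, ⟨0, by omega, fun h => ?_⟩,
    fun k hk => ⟨hpos (i + k) (by omega), hstep (i + k) (by omega)⟩⟩
  · simpa [Nat.add_sub_cancel' hij.le] using hrep.symm
  · simp only [add_zero, Prod.mk.injEq] at h
    have hgain := hpos i hij
    rw [h.2, hstep i hij, hΔ] at hgain
    exact hgain.false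

theorem card_le_of_not_imitationCycle [Fintype X] (hΔ : ∀ a, Δ a a = 0)
    (hnc : ¬ ImitationCycle Δ) {m : ℕ} {u v : ℕ → X} (hpos : ∀ k < m, 0 < Δ (u k) (v k))
    (hstep : ∀ k, k + 1 < m → v (k + 1) = u k) : m ≤ Fintype.card (X × X) := by
  have hinj : Set.InjOn (fun k => (u k, v k)) (range m) := by
    intro i hi j hj hrep
    wlog hij : i < j generalizing i j
    · exact (not_lt.1 hij).lt_or_eq.elim (fun hji => (this hj hi hrep.symm hji).symm) Eq.symm
    simp only [coe_range, Set.mem_Iio] at hj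
    exact (hnc (imitationCycle_of_repeat hΔ hij (fun k hk => hpos k (by omega))
      (fun k hk => hstep k (by omega)) hrep)).elim
  simpa using card_le_card_of_injOn _ (fun k _ => mem_univ _) hinj

theorem count_gain_le_card_of_not_imitationCycle [Fintype X] (hΔ : ∀ a, Δ a a = 0)
    (hnc : ¬ ImitationCycle Δ) (x : ℕ → X) (y0 : X) (N : ℕ) :
    Nat.count (fun t => 0 < Δ (x t) (imitSeq Δ x y0 t)) N ≤ Fintype.card (X × X) :=
  card_le_of_not_imitationCycle hΔ hnc
    (fun k hk => Nat.nth_mem k (Nat.lt_card_of_lt_count hk)) fun _ hk => imitSeq_nth_gain_succ hk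

theorem sum_le_card_mul_of_not_imitationCycle [Fintype X] (hΔ : ∀ a, Δ a a = 0)
    (hnc : ¬ ImitationCycle Δ) {B : ℝ} (hB : ∀ a b, Δ a b ≤ B) (hB0 : 0 ≤ B)
    (x : ℕ → X) (y0 : X) (N : ℕ) :
    ∑ t ∈ range N, Δ (x t) (imitSeq Δ x y0 t) ≤ Fintype.card (X × X) * B := by
  set p := fun t => 0 < Δ (x t) (imitSeq Δ x y0 t)
  calc ∑ t ∈ range N, Δ (x t) (imitSeq Δ x y0 t)
      ≤ ∑ t ∈ range N, if p t then B else 0 :=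
        sum_le_sum fun t _ => by split_ifs with h; exacts [hB _ _, not_lt.1 h]
    _ = Nat.count p N * B := by
        rw [← sum_filter, sum_const, Nat.count_eq_card_filter_range, nsmul_eq_mul]
    _ ≤ Fintype.card (X × X) * B := by
        gcongr; exact count_gain_le_card_of_not_imitationCycle hΔ hnc x y0 N

theorem imitationCycle_of_moneyPump [Fintype X] (hΔ : ∀ a, Δ a a = 0) (hmp : MoneyPump Δ) :
    ImitationCycle Δ := by
  by_contra hnc
  obtain ⟨B, hB⟩ := (Set.finite_range (Function.uncurry Δ)).bddAbove
  obtain ⟨y0, x, T, hT⟩ := hmp (Fintype.card (X × X) * max B 0)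
  exact hT.not_ge <| sum_le_card_mul_of_not_imitationCycle hΔ hnc
    (fun a b => (hB ⟨(a, b), rfl⟩).trans (le_max_left _ _)) (le_max_right _ _) x y0 _

end Imitation

theorem stmt1_general {X : Type*} [Fintype X] (π : X → X → ℝ)
    (Δ : X → X → ℝ) (hΔ : ∀ x y, Δ x y = π x y - π y x) :
    MoneyPump Δ ↔ ImitationCycle Δ :=
  ⟨imitationCycle_of_moneyPump fun a => by rw [hΔ, sub_self], ImitationCycle.moneyPump⟩

theorem stmt1 {X : Type*} [Fintype X] [Nonempty X] (π : X → X → ℝ)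
    (Δ : X → X → ℝ) (hΔ : ∀ x y, Δ x y = π x y - π y x) :
    MoneyPump Δ ↔ ImitationCycle Δ :=
  stmt1_general π Δ hΔ
end

section
/- If a finite symmetric two-player game (X, π) has no finite population evolutionarily stable strategy (fESS), then imitation is subject to a money pump. -/
theorem imitSeq_iterate {X : Type*} (Δ : X → X → ℝ) (f : X → X) (hf : ∀ y, 0 < Δ (f y) y)
    (y0 : X) (t : ℕ) : imitSeq Δ (fun s => f (f^[s] y0)) y0 t = f^[t] y0 := by
  induction t with
  | zero => rfl
  | succ t ih =>
    rw [imitSeq, ih, if_pos (hf _), Function.iterate_succ_apply']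

theorem moneyPump_of_forall_exists_pos {X : Type*} [Finite X] [Nonempty X] (Δ : X → X → ℝ)
    (h : ∀ y, ∃ z, 0 < Δ z y) : MoneyPump Δ := by
  choose f hf using h
  obtain ⟨ymin, hmin⟩ := Finite.exists_min fun y => Δ (f y) y
  set ε := Δ (f ymin) ymin
  have hε : 0 < ε := hf ymin
  intro M
  obtain ⟨n, hn⟩ := exists_nat_gt (M / ε)
  obtain ⟨y0⟩ := ‹Nonempty X›
  set x : ℕ → X := fun s => f (f^[s] y0)
  refine ⟨y0, x, n, ?_⟩
  have hsum := Finset.card_nsmul_le_sum (Finset.range (n + 1))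
    (fun t => Δ (x t) (imitSeq Δ x y0 t)) ε fun t _ => by
      simp only [x, imitSeq_iterate Δ f hf]
      exact hmin _
  rw [Finset.card_range, nsmul_eq_mul] at hsum
  calc M < n * ε := (div_lt_iff₀ hε).mp hn
    _ ≤ (n + 1 : ℕ) * ε := by gcongr; omega
    _ ≤ _ := hsum

theorem stmt4 {X : Type*} [Fintype X] [Nonempty X] (π : X → X → ℝ)
    (Δ : X → X → ℝ) (hΔ : ∀ x y, Δ x y = π x y - π y x)
    (hnofess : ¬ ∃ xs : X, ∀ x : X, π x xs ≤ π xs x) :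
    MoneyPump Δ := by
  push Not at hnofess
  refine moneyPump_of_forall_exists_pos Δ fun y => ?_
  obtain ⟨z, hz⟩ := hnofess y
  exact ⟨z, by rw [hΔ]; linarith⟩
end

section
/- Let (X, π) be a finite symmetric zero-sum two-player game, i.e., π(x, y) = −π(y, x) for all x, y ∈ X. Then imitation is subject to a money pump in (X, π) if and only if (X, π) is a generalized rock-paper-scissors game. -/
/-- A symmetric zero-sum game is a generalized rock-paper-scissors game if there is a
nonempty subset `S` of actions such that for every `y ∈ S` there is `x ∈ S` with
strictly positive payoff. -/
def GeneralizedRPS {X : Type*} (Δ : X → X → ℝ) : Prop :=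
  ∃ S : Set X, S.Nonempty ∧ ∀ y ∈ S, ∃ x ∈ S, 0 < Δ x y

/-!
If some nonempty set of actions has no maximal element for the relation "`x` beats `y`"
(`0 < Δ x y`), the opponent can lead the imitator around it forever, earning at least the
smallest positive value of `Δ` in every round. Otherwise "beats" is well-founded, so the imitator
never returns to an action it has abandoned. The opponent gains only in rounds where the imitator
then switches, by a bounded amount, and there are at most `|X|` such rounds.
-/

open Finset Relation

section

variable {X : Type*} {Δ : X → X → ℝ}

theorem wellFounded_of_not_generalizedRPS (h : ¬ GeneralizedRPS Δ) :
    WellFounded fun a b => 0 < Δ a b := by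
  rw [WellFounded.wellFounded_iff_has_min]
  intro S hS
  by_contra! hmin
  exact h ⟨S, hS, hmin⟩

theorem generalizedRPS_congr {Δ' : X → X → ℝ} (h : ∀ x y, 0 < Δ x y ↔ 0 < Δ' x y) :
    GeneralizedRPS Δ ↔ GeneralizedRPS Δ' := by
  simp only [GeneralizedRPS, h]

section Imitation

variable (x : ℕ → X) (y0 : X)

theorem imitSeq_succ (t : ℕ) : imitSeq Δ x y0 (t + 1) =
    if 0 < Δ (x t) (imitSeq Δ x y0 t) then x t else imitSeq Δ x y0 t :=
  rfl

theorem imitSeq_eq_of_pos {a : ℕ → X} (ha : ∀ t, 0 < Δ (a (t + 1)) (a t)) :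
    imitSeq Δ (fun t => a (t + 1)) (a 0) = a := by
  funext t
  induction t with
  | zero => rfl
  | succ t ih => rw [imitSeq_succ, ih, if_pos (ha t)]

theorem reflTransGen_imitSeq {s t : ℕ} (hst : s ≤ t) :
    ReflTransGen (fun a b => 0 < Δ a b) (imitSeq Δ x y0 t) (imitSeq Δ x y0 s) := by
  induction t, hst using Nat.le_induction with
  | base => exact .refl
  | succ t _ ih =>
    rw [imitSeq_succ]
    split_ifs with hpos
    · exact .head hpos ih
    · exact ih

theorem imitSeq_ne_of_switch (hwf : WellFounded fun a b => 0 < Δ a b) {s t : ℕ}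
    (hs : 0 < Δ (x s) (imitSeq Δ x y0 s)) (hst : s < t) :
    imitSeq Δ x y0 t ≠ imitSeq Δ x y0 s := by
  intro heq
  have hnext : imitSeq Δ x y0 (s + 1) = x s := by rw [imitSeq_succ, if_pos hs]
  have hcycle : TransGen (fun a b => 0 < Δ a b) (imitSeq Δ x y0 t) (imitSeq Δ x y0 s) :=
    .tail' (reflTransGen_imitSeq x y0 hst) (hnext ▸ hs)
  exact hwf.transGen.irrefl.irrefl _ (heq ▸ hcycle)

theorem sum_imitSeq_le [Fintype X] (hwf : WellFounded fun a b => 0 < Δ a b) {C : ℝ}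
    (hC : ∀ a b, Δ a b ≤ C) (hC0 : 0 ≤ C) (T : ℕ) :
    ∑ t ∈ range (T + 1), Δ (x t) (imitSeq Δ x y0 t) ≤ Fintype.card X * C := by
  classical
  set y := imitSeq Δ x y0
  set F := (range (T + 1)).filter fun t => 0 < Δ (x t) (y t)
  have hinj : Set.InjOn y F := by
    intro s hs t ht hyst
    have hs' := (mem_filter.mp hs).2
    have ht' := (mem_filter.mp ht).2
    by_contra hne
    rcases Ne.lt_or_gt hne with h | h
    · exact imitSeq_ne_of_switch x y0 hwf hs' h hyst.symm
    · exact imitSeq_ne_of_switch x y0 hwf ht' h hyst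
  have hcard : F.card ≤ Fintype.card X :=
    card_le_card_of_injOn y (fun _ _ => mem_univ _) hinj
  calc ∑ t ∈ range (T + 1), Δ (x t) (y t)
      ≤ ∑ t ∈ range (T + 1), if 0 < Δ (x t) (y t) then Δ (x t) (y t) else 0 := by
        gcongr with t
        split_ifs with h
        · exact le_rfl
        · exact not_lt.mp h
    _ = ∑ t ∈ F, Δ (x t) (y t) := (sum_filter _ _).symm
    _ ≤ F.card * C := by simpa using sum_le_card_nsmul F _ C fun t _ => hC _ _
    _ ≤ Fintype.card X * C := by gcongr

end Imitation

theorem not_moneyPump_of_wellFounded [Finite X] (hwf : WellFounded fun a b => 0 < Δ a b) :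
    ¬ MoneyPump Δ := by
  have := Fintype.ofFinite X
  obtain ⟨C, hC⟩ := Finite.bddAbove_range fun p : X × X => Δ p.1 p.2
  intro hmp
  obtain ⟨y0, x, T, hT⟩ := hmp (Fintype.card X * max C 0)
  have hC' : ∀ a b, Δ a b ≤ max C 0 := fun a b =>
    (hC ⟨(a, b), rfl⟩).trans (le_max_left _ _)
  exact hT.not_ge (sum_imitSeq_le x y0 hwf hC' (le_max_right _ _) T)

theorem exists_pos_le_of_pos [Finite X] [Nonempty X] (Δ : X → X → ℝ) :
    ∃ ε > 0, ∀ a b, 0 < Δ a b → ε ≤ Δ a b := by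
  let f : X × X → ℝ := fun p => if 0 < Δ p.1 p.2 then Δ p.1 p.2 else 1
  have hf : ∀ p, 0 < f p := fun p => by dsimp only [f]; split_ifs with h <;> simp [h]
  obtain ⟨p₀, hp₀⟩ := Finite.exists_min f
  refine ⟨f p₀, hf p₀, fun a b hab => ?_⟩
  simpa [f, hab] using hp₀ (a, b)

theorem moneyPump_of_generalizedRPS [Finite X] (h : GeneralizedRPS Δ) : MoneyPump Δ := by
  obtain ⟨S, ⟨s₀, hs₀⟩, hS⟩ := h
  have : Nonempty X := ⟨s₀⟩
  choose g hgS hg using hS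
  let a : ℕ → S := fun n => (fun y : S => (⟨g y y.2, hgS y y.2⟩ : S))^[n] ⟨s₀, hs₀⟩
  have ha : ∀ t, 0 < Δ (a (t + 1)) (a t) := fun t => by
    simp only [a, Function.iterate_succ_apply']
    exact hg _ _
  obtain ⟨ε, hε, hεle⟩ := exists_pos_le_of_pos Δ
  intro M
  obtain ⟨T, hT⟩ := exists_nat_gt (M / ε)
  refine ⟨a 0, fun t => a (t + 1), T, ?_⟩
  rw [imitSeq_eq_of_pos (a := fun t => (a t : X)) ha]
  calc M < (T + 1) * ε := by rw [div_lt_iff₀ hε] at hT; nlinarith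
    _ ≤ ∑ t ∈ range (T + 1), Δ (a (t + 1)) (a t) := by
      simpa using card_nsmul_le_sum (range (T + 1)) _ ε fun t _ => hεle _ _ (ha t)

theorem moneyPump_iff_generalizedRPS [Finite X] : MoneyPump Δ ↔ GeneralizedRPS Δ :=
  ⟨fun hmp => by_contra fun h => not_moneyPump_of_wellFounded
    (wellFounded_of_not_generalizedRPS h) hmp, moneyPump_of_generalizedRPS⟩

end

theorem stmt5_general {X : Type*} [Fintype X] (π : X → X → ℝ)
    (hzs : ∀ x y, π x y = -π y x)
    (Δ : X → X → ℝ) (hΔ : ∀ x y, Δ x y = π x y - π y x) :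
    MoneyPump Δ ↔ GeneralizedRPS π := by
  have hpos : ∀ x y, 0 < Δ x y ↔ 0 < π x y := fun x y => by
    rw [hΔ, hzs y x]
    constructor <;> intro h <;> linarith
  exact moneyPump_iff_generalizedRPS.trans (generalizedRPS_congr hpos)

theorem stmt5 {X : Type*} [Fintype X] [Nonempty X] (π : X → X → ℝ)
    (hzs : ∀ x y, π x y = -π y x)
    (Δ : X → X → ℝ) (hΔ : ∀ x y, Δ x y = π x y - π y x) :
    MoneyPump Δ ↔ GeneralizedRPS π :=
  stmt5_general π hzs Δ hΔ
end
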